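/- Let b(v,u) be the bilinear form on Λ = H¹_*(0,1) × H¹_0(0,1) × L²(0,1) defined by b(v,u) = k∫(v₁ₓ+v₃)(u₁ₓ+u₃) + ρ₁∫v₁u₁ + b∫v₃ₓu₃ₓ + (δ²(β+τ)+ρ₂)∫v₃u₃ + ρ₃δ(β+τ)∫(∫₀ˣv₅)u₃ + ρ₃∫v₅u₅, symmetrized with the remaining cross and square terms. Then b(v,v) = k‖v₁ₓ+v₃‖² + ρ₁‖v₁‖² + b‖v₃ₓ‖² + (δ²(β+τ)+ρ₂)‖v₃‖² + ρ₃‖v₅‖² + 2ρ₃(β+τ)δ∫v₃(∫₀ˣv₅) + ρ₃²(β+τ)∫(∫₀ˣv₅)² ≥ c₀‖v‖²_Λ for some c₀ > 0, i.e., b is coercive on Λ. -/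
import Mathlib


open MeasureTheory intervalIntegral

/-- Coercivity of the bilinear form `b` on
`Λ = H¹_*(0,1) × H¹₀(0,1) × L²(0,1)`: there is `c₀ > 0` such that
`b(v,v) ≥ c₀‖v‖²_Λ` for all admissible `v = (v₁,v₃,v₅)`. -/
theorem stmt_19 (k ρ₁ ρ₂ ρ₃ bb δ β τ : ℝ)
    (hk : 0 < k) (hρ₁ : 0 < ρ₁) (hρ₂ : 0 < ρ₂) (hρ₃ : 0 < ρ₃)
    (hbb : 0 < bb) (hδ : 0 < δ) (hβ : 0 < β) (hτ : 0 < τ) :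
    ∃ c₀ > (0:ℝ), ∀ v₁ v₃ v₅ : ℝ → ℝ,
      ContDiff ℝ 1 v₁ → ContDiff ℝ 1 v₃ → Continuous v₅ →
      (∫ x in (0:ℝ)..1, v₁ x) = 0 → v₃ 0 = 0 → v₃ 1 = 0 →
      c₀ * ((∫ x in (0:ℝ)..1, (deriv v₁ x + v₃ x) ^ 2)
            + (∫ x in (0:ℝ)..1, (v₁ x) ^ 2)
            + (∫ x in (0:ℝ)..1, (deriv v₃ x) ^ 2)
            + (∫ x in (0:ℝ)..1, (v₅ x) ^ 2))
        ≤ k * (∫ x in (0:ℝ)..1, (deriv v₁ x + v₃ x) ^ 2)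
          + ρ₁ * (∫ x in (0:ℝ)..1, (v₁ x) ^ 2)
          + bb * (∫ x in (0:ℝ)..1, (deriv v₃ x) ^ 2)
          + (δ ^ 2 * (β + τ) + ρ₂) * (∫ x in (0:ℝ)..1, (v₃ x) ^ 2)
          + ρ₃ * (∫ x in (0:ℝ)..1, (v₅ x) ^ 2)
          + 2 * ρ₃ * (β + τ) * δ
              * (∫ x in (0:ℝ)..1, v₃ x * (∫ y in (0:ℝ)..x, v₅ y))
          + ρ₃ ^ 2 * (β + τ)
              * (∫ x in (0:ℝ)..1, (∫ y in (0:ℝ)..x, v₅ y) ^ 2) := by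
  refine ⟨min (min k ρ₁) (min bb ρ₃), by positivity, ?_⟩
  intro v₁ v₃ v₅ hv₁ hv₃ hv₅ _ _ _
  set c₀ := min (min k ρ₁) (min bb ρ₃) with hc₀
  set W : ℝ → ℝ := fun x => ∫ y in (0:ℝ)..x, v₅ y with hWdef
  have hW : Continuous W := intervalIntegral.continuous_primitive
    (fun a b => hv₅.intervalIntegrable a b) 0
  have hc₃ : Continuous v₃ := hv₃.continuous
  -- integrability facts
  have i₃ : IntervalIntegrable (fun x => (v₃ x) ^ 2) volume 0 1 :=
    (hc₃.pow 2).intervalIntegrable 0 1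
  have iW : IntervalIntegrable (fun x => (W x) ^ 2) volume 0 1 :=
    (hW.pow 2).intervalIntegrable 0 1
  have i₃W : IntervalIntegrable (fun x => v₃ x * W x) volume 0 1 :=
    (hc₃.mul hW).intervalIntegrable 0 1
  -- nonnegativity of the integrals
  have h01 : (0:ℝ) ≤ 1 := zero_le_one
  have nA : (0:ℝ) ≤ ∫ x in (0:ℝ)..1, (deriv v₁ x + v₃ x) ^ 2 :=
    intervalIntegral.integral_nonneg h01 (fun x _ => sq_nonneg _)
  have nB : (0:ℝ) ≤ ∫ x in (0:ℝ)..1, (v₁ x) ^ 2 :=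
    intervalIntegral.integral_nonneg h01 (fun x _ => sq_nonneg _)
  have nC : (0:ℝ) ≤ ∫ x in (0:ℝ)..1, (deriv v₃ x) ^ 2 :=
    intervalIntegral.integral_nonneg h01 (fun x _ => sq_nonneg _)
  have nD : (0:ℝ) ≤ ∫ x in (0:ℝ)..1, (v₅ x) ^ 2 :=
    intervalIntegral.integral_nonneg h01 (fun x _ => sq_nonneg _)
  have n₃ : (0:ℝ) ≤ ∫ x in (0:ℝ)..1, (v₃ x) ^ 2 :=
    intervalIntegral.integral_nonneg h01 (fun x _ => sq_nonneg _)
  have nS : (0:ℝ) ≤ ∫ x in (0:ℝ)..1, (δ * v₃ x + ρ₃ * W x) ^ 2 :=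
    intervalIntegral.integral_nonneg h01 (fun x _ => sq_nonneg _)
  -- expand the square
  have hexp : (∫ x in (0:ℝ)..1, (δ * v₃ x + ρ₃ * W x) ^ 2)
      = δ ^ 2 * (∫ x in (0:ℝ)..1, (v₃ x) ^ 2)
        + 2 * δ * ρ₃ * (∫ x in (0:ℝ)..1, v₃ x * W x)
        + ρ₃ ^ 2 * (∫ x in (0:ℝ)..1, (W x) ^ 2) := by
    rw [← intervalIntegral.integral_const_mul, ← intervalIntegral.integral_const_mul,
      ← intervalIntegral.integral_const_mul,
      ← intervalIntegral.integral_add (i₃.const_mul _) (i₃W.const_mul _),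
      ← intervalIntegral.integral_add (((i₃.const_mul _).add (i₃W.const_mul _))) (iW.const_mul _)]
    congr 1
    funext x
    ring
  -- cross-term nonnegativity
  have hcross : 0 ≤ δ ^ 2 * (β + τ) * (∫ x in (0:ℝ)..1, (v₃ x) ^ 2)
      + 2 * ρ₃ * (β + τ) * δ * (∫ x in (0:ℝ)..1, v₃ x * W x)
      + ρ₃ ^ 2 * (β + τ) * (∫ x in (0:ℝ)..1, (W x) ^ 2) := by
    have := mul_nonneg (le_of_lt (by positivity : (0:ℝ) < β + τ)) nS
    nlinarith [this]
  have hkk : c₀ ≤ k := le_trans (min_le_left _ _) (min_le_left _ _)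
  have hr1 : c₀ ≤ ρ₁ := le_trans (min_le_left _ _) (min_le_right _ _)
  have hb : c₀ ≤ bb := le_trans (min_le_right _ _) (min_le_left _ _)
  have hr3 : c₀ ≤ ρ₃ := le_trans (min_le_right _ _) (min_le_right _ _)
  have hρ₂n : 0 ≤ ρ₂ * (∫ x in (0:ℝ)..1, (v₃ x) ^ 2) := mul_nonneg hρ₂.le n₃
  nlinarith [mul_le_mul_of_nonneg_right hkk nA, mul_le_mul_of_nonneg_right hr1 nB,
    mul_le_mul_of_nonneg_right hb nC, mul_le_mul_of_nonneg_right hr3 nD]
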